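/- Let π be a probability measure on ℝ × ℝ whose first and second marginals μ and ν each have finite second moments. Then ∫ x·y dπ(x,y) ≥ ∫₀¹ Q_μ(u) Q_ν(1−u) du, where Q_μ and Q_ν are the quantile functions of μ and ν; i.e., the countermonotone coupling (Q_μ(U), Q_ν(1−U)) with U uniform on (0,1) minimizes the expected product among all couplings with the given marginals. (Lower Fréchet–Hoeffding bound: this identifies c(−1) as the smallest correlation attainable by the NORTA model for given marginals.) -/

import Mathlib

open MeasureTheory ProbabilityTheory

/-- The quantile function (generalized inverse cdf) of a measure `μ` on `ℝ`:
`Q_μ(p) = inf {x : F_μ(x) ≥ p}`. -/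
noncomputable def quantile (μ : Measure ℝ) (p : ℝ) : ℝ :=
  sInf {x : ℝ | p ≤ cdf μ x}

/-!
Hoeffding's identity `x * y = ∫∫ K(x,s) K(y,t) ds dt`, with `K(x,s) = 𝟙[s < x] - 𝟙[s < 0]`,
and Fubini express `∫ x y dπ` as the integral over `(s,t)` of the joint survival function
`π((s,∞) × (t,∞))` plus terms depending only on the marginals. So among couplings of `μ` and `ν`
the expected product is monotone in the joint survival function. The Fréchet lower bound
`π((s,∞) × (t,∞)) ≥ 1 - F_μ(s) - F_ν(t)` is attained by the law of `(Q_μ(U), Q_ν(1 - U))`, since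
`x < Q_μ(u) ↔ F_μ(x) < u` for `u ∈ (0,1)`.
-/

open Set Filter Topology

section Quantile

variable {μ : Measure ℝ} {p : ℝ}

lemma nonempty_setOf_le_cdf (hp : p < 1) : {x : ℝ | p ≤ cdf μ x}.Nonempty :=
  ((tendsto_cdf_atTop μ).eventually (eventually_ge_nhds hp)).exists

lemma bddBelow_setOf_le_cdf (hp : 0 < p) : BddBelow {x : ℝ | p ≤ cdf μ x} := by
  obtain ⟨y, hy⟩ := eventually_atBot.mp ((tendsto_cdf_atBot μ).eventually (eventually_lt_nhds hp))
  exact ⟨y, fun x hx => le_of_not_ge fun hxy => (hy x hxy).not_ge hx⟩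

lemma quantile_le_iff (hp0 : 0 < p) (hp1 : p < 1) {x : ℝ} :
    quantile μ p ≤ x ↔ p ≤ cdf μ x := by
  refine ⟨fun h => ?_, fun h => csInf_le (bddBelow_setOf_le_cdf hp0) h⟩
  have hright : ∀ y > x, p ≤ cdf μ y := fun y hy => by
    obtain ⟨z, hz, hzy⟩ := exists_lt_of_csInf_lt (nonempty_setOf_le_cdf hp1) (h.trans_lt hy)
    exact hz.trans (monotone_cdf μ hzy.le)
  exact ge_of_tendsto (continuousWithinAt_Ioi_iff_Ici.mpr ((cdf μ).right_continuous x))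
    (eventually_nhdsWithin_of_forall hright)

lemma lt_quantile_iff (hp0 : 0 < p) (hp1 : p < 1) {x : ℝ} :
    x < quantile μ p ↔ cdf μ x < p := by
  simpa only [not_le] using (quantile_le_iff hp0 hp1).not

lemma monotoneOn_quantile : MonotoneOn (quantile μ) (Ioo 0 1) := fun _ hp _ hq hpq =>
  (quantile_le_iff hp.1 hp.2).mpr (hpq.trans ((quantile_le_iff hq.1 hq.2).mp le_rfl))

end Quantile

lemma eq_of_forall_measureReal_Ioi {m μ : Measure ℝ} [IsProbabilityMeasure m]
    [IsProbabilityMeasure μ] (h : ∀ x, m.real (Ioi x) = 1 - cdf μ x) : m = μ := by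
  have hcdf : cdf m = cdf μ := StieltjesFunction.ext fun x => by
    rw [cdf_eq_real, ← compl_Ioi, probReal_compl_eq_one_sub measurableSet_Ioi, h, sub_sub_cancel]
  rw [← measure_cdf m, ← measure_cdf μ, hcdf]

section Uniform

variable {μ ν : Measure ℝ}

instance : IsProbabilityMeasure (volume.restrict (Ioo (0 : ℝ) 1)) :=
  ⟨by simp⟩

lemma one_sub_mem_Ioo {u : ℝ} (hu : u ∈ Ioo 0 1) : 1 - u ∈ Ioo 0 1 :=
  ⟨sub_pos.2 hu.2, sub_lt_self 1 hu.1⟩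

lemma lt_quantile_one_sub_iff {u : ℝ} (hu0 : 0 < u) (hu1 : u < 1) {x : ℝ} :
    x < quantile μ (1 - u) ↔ u < 1 - cdf μ x := by
  rw [lt_quantile_iff (sub_pos.2 hu1) (sub_lt_self 1 hu0), lt_sub_comm]

lemma aemeasurable_quantile : AEMeasurable (quantile μ) (volume.restrict (Ioo 0 1)) :=
  aemeasurable_restrict_of_monotoneOn measurableSet_Ioo monotoneOn_quantile

lemma aemeasurable_quantile_one_sub :
    AEMeasurable (fun u => quantile μ (1 - u)) (volume.restrict (Ioo 0 1)) :=
  aemeasurable_restrict_of_antitoneOn measurableSet_Ioo fun _ hp _ hq hpq =>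
    monotoneOn_quantile (one_sub_mem_Ioo hq) (one_sub_mem_Ioo hp) (sub_le_sub_left hpq 1)

lemma measureReal_setOf_lt_quantile (x : ℝ) :
    (volume.restrict (Ioo 0 1)).real {u | x < quantile μ u} = 1 - cdf μ x := by
  have hset : {u | x < quantile μ u} ∩ Ioo 0 1 = Ioo (cdf μ x) 1 := by
    ext u
    simp only [mem_inter_iff, mem_ofPred_eq, mem_Ioo]
    constructor
    · rintro ⟨h, hu0, hu1⟩
      exact ⟨(lt_quantile_iff hu0 hu1).1 h, hu1⟩
    · rintro ⟨h, hu1⟩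
      have hu0 : 0 < u := (cdf_nonneg μ x).trans_lt h
      exact ⟨(lt_quantile_iff hu0 hu1).2 h, hu0, hu1⟩
  rw [measureReal_restrict_apply' measurableSet_Ioo, hset,
    Real.volume_real_Ioo_of_le (cdf_le_one μ x)]

lemma measureReal_setOf_lt_quantile_one_sub (x : ℝ) :
    (volume.restrict (Ioo 0 1)).real {u | x < quantile μ (1 - u)} = 1 - cdf μ x := by
  have hset : {u | x < quantile μ (1 - u)} ∩ Ioo 0 1 = Ioo 0 (1 - cdf μ x) := by
    ext u
    simp only [mem_inter_iff, mem_ofPred_eq, mem_Ioo]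
    constructor
    · rintro ⟨h, hu0, hu1⟩
      exact ⟨hu0, (lt_quantile_one_sub_iff hu0 hu1).1 h⟩
    · rintro ⟨hu0, h⟩
      have hu1 : u < 1 := by linarith [cdf_nonneg μ x]
      exact ⟨(lt_quantile_one_sub_iff hu0 hu1).2 h, hu0, hu1⟩
  rw [measureReal_restrict_apply' measurableSet_Ioo, hset,
    Real.volume_real_Ioo_of_le (by linarith [cdf_le_one μ x]), sub_zero]

lemma measureReal_setOf_lt_quantile_and_lt_quantile_one_sub (s t : ℝ) :
    (volume.restrict (Ioo 0 1)).real {u | s < quantile μ u ∧ t < quantile ν (1 - u)} =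
      max (1 - cdf ν t - cdf μ s) 0 := by
  have hset : {u | s < quantile μ u ∧ t < quantile ν (1 - u)} ∩ Ioo 0 1 =
      Ioo (cdf μ s) (1 - cdf ν t) := by
    ext u
    simp only [mem_inter_iff, mem_ofPred_eq, mem_Ioo]
    constructor
    · rintro ⟨⟨hs, ht⟩, hu0, hu1⟩
      exact ⟨(lt_quantile_iff hu0 hu1).1 hs, (lt_quantile_one_sub_iff hu0 hu1).1 ht⟩
    · rintro ⟨hs, ht⟩
      have hu0 : 0 < u := (cdf_nonneg μ s).trans_lt hs
      have hu1 : u < 1 := by linarith [cdf_nonneg ν t]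
      exact ⟨⟨(lt_quantile_iff hu0 hu1).2 hs, (lt_quantile_one_sub_iff hu0 hu1).2 ht⟩, hu0, hu1⟩
  rw [measureReal_restrict_apply' measurableSet_Ioo, hset, Real.volume_real_Ioo]

theorem map_quantile_restrict_Ioo [IsProbabilityMeasure μ] :
    (volume.restrict (Ioo 0 1)).map (quantile μ) = μ :=
  have := Measure.isProbabilityMeasure_map (aemeasurable_quantile (μ := μ))
  eq_of_forall_measureReal_Ioi fun x => by
    rw [map_measureReal_apply_of_aemeasurable aemeasurable_quantile measurableSet_Ioi]
    exact measureReal_setOf_lt_quantile x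

theorem map_quantile_one_sub_restrict_Ioo [IsProbabilityMeasure μ] :
    (volume.restrict (Ioo 0 1)).map (fun u => quantile μ (1 - u)) = μ :=
  have := Measure.isProbabilityMeasure_map (aemeasurable_quantile_one_sub (μ := μ))
  eq_of_forall_measureReal_Ioi fun x => by
    rw [map_measureReal_apply_of_aemeasurable aemeasurable_quantile_one_sub measurableSet_Ioi]
    exact measureReal_setOf_lt_quantile_one_sub x

end Uniform

section Hoeffding

noncomputable def hoeffdingKernel (x s : ℝ) : ℝ :=
  (if s < x then 1 else 0) - if s < 0 then 1 else 0

lemma hoeffdingKernel_eq_indicator_sub_indicator (x s : ℝ) :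
    hoeffdingKernel x s = (Ico 0 x).indicator 1 s - (Ico x 0).indicator 1 s := by
  simp only [hoeffdingKernel, indicator_apply, mem_Ico, Pi.one_apply]
  grind

lemma abs_hoeffdingKernel (x s : ℝ) :
    |hoeffdingKernel x s| = (Ico 0 x).indicator 1 s + (Ico x 0).indicator 1 s := by
  simp only [hoeffdingKernel, indicator_apply, mem_Ico, Pi.one_apply]
  split_ifs <;> grind

lemma integrable_indicator_one_Ico (a b : ℝ) : Integrable ((Ico a b).indicator (1 : ℝ → ℝ)) :=
  (integrable_indicator_iff measurableSet_Ico).2 (integrableOn_const measure_Ico_lt_top.ne)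

lemma integrable_hoeffdingKernel (x : ℝ) : Integrable (hoeffdingKernel x) :=
  ((integrable_indicator_one_Ico 0 x).sub (integrable_indicator_one_Ico x 0)).congr
    (ae_of_all _ fun s => (hoeffdingKernel_eq_indicator_sub_indicator x s).symm)

lemma integral_hoeffdingKernel (x : ℝ) : ∫ s, hoeffdingKernel x s = x := by
  simp_rw [hoeffdingKernel_eq_indicator_sub_indicator]
  rw [integral_sub (integrable_indicator_one_Ico 0 x) (integrable_indicator_one_Ico x 0),
    integral_indicator_one measurableSet_Ico, integral_indicator_one measurableSet_Ico,
    Real.volume_real_Ico, Real.volume_real_Ico, sub_zero, zero_sub]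
  exact max_zero_sub_max_neg_zero_eq_self x

lemma integral_abs_hoeffdingKernel (x : ℝ) : ∫ s, |hoeffdingKernel x s| = |x| := by
  simp_rw [abs_hoeffdingKernel]
  rw [integral_add (integrable_indicator_one_Ico 0 x) (integrable_indicator_one_Ico x 0),
    integral_indicator_one measurableSet_Ico, integral_indicator_one measurableSet_Ico,
    Real.volume_real_Ico, Real.volume_real_Ico, sub_zero, zero_sub]
  exact max_zero_add_max_neg_zero_eq_abs_self x

lemma measurable_hoeffdingKernel : Measurable (Function.uncurry hoeffdingKernel) :=
  (Measurable.ite (measurableSet_lt measurable_snd measurable_fst) measurable_const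
    measurable_const).sub
    (Measurable.ite (measurableSet_lt measurable_snd measurable_const) measurable_const
      measurable_const)

variable {π : Measure (ℝ × ℝ)}

lemma integrable_hoeffdingKernel_mul [SFinite π] (hπ : Integrable (fun p : ℝ × ℝ => p.1 * p.2) π) :
    Integrable (fun q : (ℝ × ℝ) × (ℝ × ℝ) =>
      hoeffdingKernel q.1.1 q.2.1 * hoeffdingKernel q.1.2 q.2.2) (π.prod (volume.prod volume)) := by
  have hmeas : Measurable fun q : (ℝ × ℝ) × (ℝ × ℝ) =>
      hoeffdingKernel q.1.1 q.2.1 * hoeffdingKernel q.1.2 q.2.2 :=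
    (measurable_hoeffdingKernel.comp (measurable_fst.fst.prodMk measurable_snd.fst)).mul
      (measurable_hoeffdingKernel.comp (measurable_fst.snd.prodMk measurable_snd.snd))
  refine (integrable_prod_iff hmeas.aestronglyMeasurable).2
    ⟨ae_of_all _ fun p =>
      (integrable_hoeffdingKernel p.1).mul_prod (integrable_hoeffdingKernel p.2), ?_⟩
  have hnorm (p : ℝ × ℝ) : ∫ z : ℝ × ℝ,
      ‖hoeffdingKernel p.1 z.1 * hoeffdingKernel p.2 z.2‖ ∂(volume.prod volume) = |p.1 * p.2| := by
    simp_rw [norm_mul, Real.norm_eq_abs]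
    rw [integral_prod_mul (fun s => |hoeffdingKernel p.1 s|) (fun t => |hoeffdingKernel p.2 t|),
      integral_abs_hoeffdingKernel, integral_abs_hoeffdingKernel, abs_mul]
  simpa only [hnorm] using hπ.abs

theorem integral_mul_eq_integral_integral_hoeffdingKernel [SFinite π]
    (hπ : Integrable (fun p : ℝ × ℝ => p.1 * p.2) π) :
    ∫ p, p.1 * p.2 ∂π = ∫ z, ∫ p, hoeffdingKernel p.1 z.1 * hoeffdingKernel p.2 z.2 ∂π
      ∂(volume.prod volume) := by
  have hinner (p : ℝ × ℝ) : p.1 * p.2 = ∫ z : ℝ × ℝ,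
      hoeffdingKernel p.1 z.1 * hoeffdingKernel p.2 z.2 ∂(volume.prod volume) := by
    rw [integral_prod_mul (hoeffdingKernel p.1) (hoeffdingKernel p.2), integral_hoeffdingKernel,
      integral_hoeffdingKernel]
  simp_rw [hinner]
  exact integral_integral_swap (integrable_hoeffdingKernel_mul hπ)

end Hoeffding

section Comparison

variable {π ρ : Measure (ℝ × ℝ)}

lemma integral_hoeffdingKernel_mul_hoeffdingKernel [IsProbabilityMeasure π] (s t : ℝ) :
    ∫ p, hoeffdingKernel p.1 s * hoeffdingKernel p.2 t ∂π =
      π.real (Ioi s ×ˢ Ioi t) - (if t < 0 then 1 else 0) * (π.map Prod.fst).real (Ioi s)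
        - (if s < 0 then 1 else 0) * (π.map Prod.snd).real (Ioi t)
        + (if s < 0 then 1 else 0) * (if t < 0 then 1 else 0) := by
  have hS : MeasurableSet (Ioi s ×ˢ Ioi t) := measurableSet_Ioi.prod measurableSet_Ioi
  have hA : MeasurableSet (Prod.fst ⁻¹' Ioi s : Set (ℝ × ℝ)) := measurable_fst measurableSet_Ioi
  have hB : MeasurableSet (Prod.snd ⁻¹' Ioi t : Set (ℝ × ℝ)) := measurable_snd measurableSet_Ioi
  have hexpand : (fun p : ℝ × ℝ => hoeffdingKernel p.1 s * hoeffdingKernel p.2 t) = fun p =>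
      (Ioi s ×ˢ Ioi t).indicator 1 p
        - (if t < 0 then 1 else 0) * (Prod.fst ⁻¹' Ioi s).indicator 1 p
        - (if s < 0 then 1 else 0) * (Prod.snd ⁻¹' Ioi t).indicator 1 p
        + (if s < 0 then 1 else 0) * (if t < 0 then (1 : ℝ) else 0) := by
    funext p
    simp only [hoeffdingKernel, indicator, mem_prod, mem_preimage, mem_Ioi, Pi.one_apply]
    split_ifs <;> grind
  have hint {S : Set (ℝ × ℝ)} (hS : MeasurableSet S) : Integrable (S.indicator (1 : ℝ × ℝ → ℝ)) π :=
    (integrable_const (1 : ℝ)).indicator hS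
  rw [hexpand, integral_add, integral_sub, integral_sub, integral_const_mul, integral_const_mul,
    integral_indicator_one hS, integral_indicator_one hA, integral_indicator_one hB, integral_const,
    map_measureReal_apply measurable_fst measurableSet_Ioi,
    map_measureReal_apply measurable_snd measurableSet_Ioi]
  · simp
  exacts [hint hS, (hint hA).const_mul _, (hint hS).sub ((hint hA).const_mul _),
    (hint hB).const_mul _, ((hint hS).sub ((hint hA).const_mul _)).sub ((hint hB).const_mul _),
    integrable_const _]

theorem integral_mul_le_of_forall_measureReal_Ioi_prod_le [IsProbabilityMeasure π]
    [IsProbabilityMeasure ρ] (hfst : ρ.map Prod.fst = π.map Prod.fst)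
    (hsnd : ρ.map Prod.snd = π.map Prod.snd) (hπ : Integrable (fun p : ℝ × ℝ => p.1 * p.2) π)
    (hρ : Integrable (fun p : ℝ × ℝ => p.1 * p.2) ρ)
    (h : ∀ s t, ρ.real (Ioi s ×ˢ Ioi t) ≤ π.real (Ioi s ×ˢ Ioi t)) :
    ∫ p, p.1 * p.2 ∂ρ ≤ ∫ p, p.1 * p.2 ∂π := by
  rw [integral_mul_eq_integral_integral_hoeffdingKernel hπ,
    integral_mul_eq_integral_integral_hoeffdingKernel hρ]
  refine integral_mono (integrable_hoeffdingKernel_mul hρ).integral_prod_right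
    (integrable_hoeffdingKernel_mul hπ).integral_prod_right fun z => ?_
  simp only [integral_hoeffdingKernel_mul_hoeffdingKernel, hfst, hsnd]
  linarith [h z.1 z.2]

end Comparison

lemma one_sub_cdf_sub_cdf_le_measureReal_Ioi_prod (π : Measure (ℝ × ℝ)) [IsProbabilityMeasure π]
    (s t : ℝ) :
    1 - cdf (π.map Prod.fst) s - cdf (π.map Prod.snd) t ≤ π.real (Ioi s ×ˢ Ioi t) := by
  have := Measure.isProbabilityMeasure_map (μ := π) measurable_fst.aemeasurable
  have := Measure.isProbabilityMeasure_map (μ := π) measurable_snd.aemeasurable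
  have hcompl : π.real (Ioi s ×ˢ Ioi t)ᶜ ≤ cdf (π.map Prod.fst) s + cdf (π.map Prod.snd) t := by
    rw [compl_prod_eq_union, compl_Ioi, compl_Ioi, prod_univ, univ_prod, cdf_eq_real, cdf_eq_real,
      map_measureReal_apply measurable_fst measurableSet_Iic,
      map_measureReal_apply measurable_snd measurableSet_Iic]
    exact measureReal_union_le _ _
  rw [probReal_compl_eq_one_sub (measurableSet_Ioi.prod measurableSet_Ioi)] at hcompl
  linarith

lemma integrable_mul_of_integrable_sq_map {π : Measure (ℝ × ℝ)}
    (h₁ : Integrable (fun x : ℝ => x ^ 2) (π.map Prod.fst))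
    (h₂ : Integrable (fun x : ℝ => x ^ 2) (π.map Prod.snd)) :
    Integrable (fun p : ℝ × ℝ => p.1 * p.2) π := by
  have hL2 {f : ℝ × ℝ → ℝ} (hf : Measurable f) (h : Integrable (fun x : ℝ => x ^ 2) (π.map f)) :
      MemLp f 2 π :=
    (memLp_map_measure_iff aestronglyMeasurable_id hf.aemeasurable).1
      ((memLp_two_iff_integrable_sq aestronglyMeasurable_id).2 h)
  exact (hL2 measurable_fst h₁).integrable_mul (hL2 measurable_snd h₂)

section Countermonotone

variable (μ ν : Measure ℝ)

noncomputable def countermonotoneCoupling : Measure (ℝ × ℝ) :=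
  (volume.restrict (Ioo 0 1)).map fun u => (quantile μ u, quantile ν (1 - u))

lemma aemeasurable_quantile_prodMk_quantile_one_sub :
    AEMeasurable (fun u => (quantile μ u, quantile ν (1 - u))) (volume.restrict (Ioo 0 1)) :=
  aemeasurable_quantile.prodMk aemeasurable_quantile_one_sub

instance : IsProbabilityMeasure (countermonotoneCoupling μ ν) :=
  Measure.isProbabilityMeasure_map (aemeasurable_quantile_prodMk_quantile_one_sub μ ν)

lemma measureReal_countermonotoneCoupling_Ioi_prod (s t : ℝ) :
    (countermonotoneCoupling μ ν).real (Ioi s ×ˢ Ioi t) = max (1 - cdf ν t - cdf μ s) 0 := by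
  rw [countermonotoneCoupling, map_measureReal_apply_of_aemeasurable
    (aemeasurable_quantile_prodMk_quantile_one_sub μ ν) (measurableSet_Ioi.prod measurableSet_Ioi)]
  exact measureReal_setOf_lt_quantile_and_lt_quantile_one_sub s t

lemma map_fst_countermonotoneCoupling [IsProbabilityMeasure μ] :
    (countermonotoneCoupling μ ν).map Prod.fst = μ := by
  rw [countermonotoneCoupling, AEMeasurable.map_map_of_aemeasurable measurable_fst.aemeasurable
    (aemeasurable_quantile_prodMk_quantile_one_sub μ ν)]
  exact map_quantile_restrict_Ioo

lemma map_snd_countermonotoneCoupling [IsProbabilityMeasure ν] :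
    (countermonotoneCoupling μ ν).map Prod.snd = ν := by
  rw [countermonotoneCoupling, AEMeasurable.map_map_of_aemeasurable measurable_snd.aemeasurable
    (aemeasurable_quantile_prodMk_quantile_one_sub μ ν)]
  exact map_quantile_one_sub_restrict_Ioo

end Countermonotone

/-- Lower Fréchet–Hoeffding bound: for any coupling `π` of marginals `μ, ν` with finite second
moments, `∫ x y dπ ≥ ∫₀¹ Q_μ(u) Q_ν(1-u) du`; the countermonotone coupling minimizes the
expected product. -/
theorem countermonotone_le_integral_mul (π : Measure (ℝ × ℝ)) [IsProbabilityMeasure π]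
    (μ ν : Measure ℝ)
    (hμ : Measure.map Prod.fst π = μ) (hν : Measure.map Prod.snd π = ν)
    (hμ2 : Integrable (fun x : ℝ => x ^ 2) μ) (hν2 : Integrable (fun x : ℝ => x ^ 2) ν) :
    (∫ u in Set.Ioo (0 : ℝ) 1, quantile μ u * quantile ν (1 - u)) ≤
      ∫ p : ℝ × ℝ, p.1 * p.2 ∂π := by
  subst hμ hν
  set μ := π.map Prod.fst
  set ν := π.map Prod.snd
  have : IsProbabilityMeasure μ := Measure.isProbabilityMeasure_map measurable_fst.aemeasurable
  have : IsProbabilityMeasure ν := Measure.isProbabilityMeasure_map measurable_snd.aemeasurable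
  have hfst := map_fst_countermonotoneCoupling μ ν
  have hsnd := map_snd_countermonotoneCoupling μ ν
  have hρ : ∫ p, p.1 * p.2 ∂(countermonotoneCoupling μ ν) =
      ∫ u in Ioo 0 1, quantile μ u * quantile ν (1 - u) :=
    integral_map (aemeasurable_quantile_prodMk_quantile_one_sub μ ν)
      (measurable_fst.mul measurable_snd).aestronglyMeasurable
  rw [← hρ]
  refine integral_mul_le_of_forall_measureReal_Ioi_prod_le hfst hsnd
    (integrable_mul_of_integrable_sq_map hμ2 hν2)
    (integrable_mul_of_integrable_sq_map (by rwa [hfst]) (by rwa [hsnd])) fun s t => ?_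
  rw [measureReal_countermonotoneCoupling_Ioi_prod]
  exact max_le (by linarith [one_sub_cdf_sub_cdf_le_measureReal_Ioi_prod π s t]) measureReal_nonneg
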